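/- For every real λ with 0 < λ < 1, the quasi-period integral of the Legendre elliptic curve satisfies ∫_0^λ x·dx/√(x(1−x)(λ−x)) = 2·(K(√λ) − E(√λ)). -/

import Mathlib

/-!
Substituting `x = λ t²` turns the integrand into `2 λ t² / √((1 - t²)(1 - λ t²))`, and writing
`λ t² = 1 - (1 - λ t²)` splits this into twice the difference of the integrands of `K(√λ)` and
`E(√λ)`. Both of those are continuous multiples of `1 / √(1 - t²) = arcsin'`, hence integrable.
-/

/-- The complete elliptic integral of the first kind. -/
noncomputable def Kint (x : ℝ) : ℝ :=
  ∫ t in (0:ℝ)..1, 1 / Real.sqrt ((1 - t ^ 2) * (1 - x ^ 2 * t ^ 2))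

/-- The complete elliptic integral of the second kind. -/
noncomputable def Eint (x : ℝ) : ℝ :=
  ∫ t in (0:ℝ)..1, Real.sqrt (1 - x ^ 2 * t ^ 2) / Real.sqrt (1 - t ^ 2)

open Real Set MeasureTheory

lemma intervalIntegrable_one_div_sqrt_one_sub_sq :
    IntervalIntegrable (fun t : ℝ => 1 / √(1 - t ^ 2)) volume (-1) 1 :=
  intervalIntegral.intervalIntegrable_deriv_of_nonneg continuous_arcsin.continuousOn
    (fun _ ht => by
      norm_num at ht
      exact hasDerivAt_arcsin (by linarith [ht.1]) (by linarith [ht.2]))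
    (fun _ _ => by positivity)

lemma intervalIntegrable_ellipticK_integrand {m : ℝ} (hm : m < 1) :
    IntervalIntegrable (fun t : ℝ => 1 / √((1 - t ^ 2) * (1 - m * t ^ 2))) volume (-1) 1 := by
  have hpos : ∀ t ∈ uIcc (-1 : ℝ) 1, 0 < 1 - m * t ^ 2 := by
    intro t ht
    rw [uIcc_of_le (by norm_num)] at ht
    have : t ^ 2 ≤ 1 := by nlinarith [ht.1, ht.2]
    rcases le_or_gt m 0 with hm0 | hm0 <;> nlinarith [sq_nonneg t]
  refine (intervalIntegrable_one_div_sqrt_one_sub_sq.continuousOn_mul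
    (g := fun t => 1 / √(1 - m * t ^ 2)) ?_).congr ?_
  · exact continuousOn_const.div (by fun_prop) fun t ht => (sqrt_pos.2 (hpos t ht)).ne'
  · intro t ht
    simp only
    rw [sqrt_mul' _ (hpos t (uIoc_subset_uIcc ht)).le]
    ring

lemma intervalIntegrable_ellipticE_integrand (m : ℝ) :
    IntervalIntegrable (fun t : ℝ => √(1 - m * t ^ 2) / √(1 - t ^ 2)) volume (-1) 1 := by
  simpa only [div_eq_mul_one_div (√(1 - m * _))] using
    intervalIntegrable_one_div_sqrt_one_sub_sq.continuousOn_mul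
      (g := fun t => √(1 - m * t ^ 2)) (by fun_prop)

lemma one_div_sqrt_mul_sub_sqrt_div_sqrt (a : ℝ) {b : ℝ} (hb : 0 ≤ b) :
    1 / √(a * b) - √b / √a = (1 - b) / √(a * b) := by
  rw [sqrt_mul' a hb]
  rcases eq_or_ne √a 0 with ha | ha
  · simp [ha]
  rcases eq_or_ne √b 0 with hb' | hb'
  · simp [hb']
  field_simp
  rw [sq_sqrt hb]

lemma two_mul_mul_quasiPeriod_integrand_mul_sq {l t : ℝ} (hl : 0 ≤ l) (ht : 0 ≤ t) :
    2 * l * t * (l * t ^ 2 / √(l * t ^ 2 * (1 - l * t ^ 2) * (l - l * t ^ 2))) =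
      2 * (l * t ^ 2 / √((1 - t ^ 2) * (1 - l * t ^ 2))) := by
  have hfactor : l * t ^ 2 * (1 - l * t ^ 2) * (l - l * t ^ 2) =
      (l * t) ^ 2 * ((1 - t ^ 2) * (1 - l * t ^ 2)) := by ring
  rw [hfactor, sqrt_mul (sq_nonneg _), sqrt_sq (by positivity)]
  rcases eq_or_ne (l * t) 0 with hlt | hlt
  · have : l * t ^ 2 = 0 := by rw [sq, ← mul_assoc, hlt, zero_mul]
    simp [hlt, this]
  rw [show l * t ^ 2 = l * t * t by ring, mul_div_mul_left _ _ hlt]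
  ring

/-- The quasi-period integral `∫_0^λ x dx/√(x(1-x)(λ-x)) = 2 (K(√λ) - E(√λ))`. -/
theorem legendre_quasi_period (l : ℝ) (h0 : 0 < l) (h1 : l < 1) :
    (∫ x in (0:ℝ)..l, x / Real.sqrt (x * (1 - x) * (l - x))) =
      2 * (Kint (Real.sqrt l) - Eint (Real.sqrt l)) := by
  have hsubst := intervalIntegral.integral_deriv_smul_comp_of_deriv_nonneg (a := 0) (b := 1)
    (f := fun t => l * t ^ 2) (f' := fun t => 2 * l * t)
    (g := fun x => x / √(x * (1 - x) * (l - x))) (by fun_prop)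
    (fun t _ => by
      simpa [mul_comm, mul_assoc, mul_left_comm] using (hasDerivAt_pow 2 t).const_mul l)
    (fun t ht => by norm_num at ht; nlinarith [ht.1])
  simp only [Function.comp_apply, smul_eq_mul, one_pow, mul_one, ne_eq, OfNat.ofNat_ne_zero,
    not_false_eq_true, zero_pow, mul_zero] at hsubst
  have hIcc : Icc (0 : ℝ) 1 ⊆ uIcc (-1) 1 := by rw [uIcc_of_le (by norm_num)]; gcongr; norm_num
  rw [← hsubst, Kint, Eint, sq_sqrt h0.le, ← intervalIntegral.integral_sub
    ((intervalIntegrable_ellipticK_integrand h1).mono_set (by simpa using hIcc))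
    ((intervalIntegrable_ellipticE_integrand l).mono_set (by simpa using hIcc)),
    ← intervalIntegral.integral_const_mul]
  refine intervalIntegral.integral_congr fun t ht => ?_
  rw [uIcc_of_le zero_le_one] at ht
  have hb : 0 ≤ 1 - l * t ^ 2 := by nlinarith [ht.1, ht.2]
  rw [two_mul_mul_quasiPeriod_integrand_mul_sq h0.le ht.1, one_div_sqrt_mul_sub_sqrt_div_sqrt _ hb,
    sub_sub_cancel]
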